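/- Let p_1, ..., p_k ∈ ℂ[u] be monic polynomials with pairwise distinct degrees d_1, ..., d_k. Then the discrete Wronskian W(p_1,...,p_k)(u) = det( p_b(u + i(k+1−2a)/2) )_{a,b=1..k} is a polynomial of degree exactly Σ_{a=1}^k d_a − k(k−1)/2, with leading coefficient i^{k(k−1)/2} · ∏_{1 ≤ a < b ≤ k} (d_a − d_b). In particular W(p_1,...,p_k) ≠ 0. -/

import Mathlib

open Polynomial

/-- The k×k discrete Wronskian of polynomials: `det(p_b(u + i(k+1−2a)/2))`, `a,b = 1..k`. -/
noncomputable def WrP (k : ℕ) (p : Fin k → Polynomial ℂ) : Polynomial ℂ :=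
  Matrix.det (Matrix.of fun a b : Fin k =>
    (p b).comp (Polynomial.X
      + Polynomial.C (Complex.I * ((k : ℂ) - 1 - 2 * ((a : ℕ) : ℂ)) / 2)))

/-!
Let `c a` be the shifts and `V` the Vandermonde matrix of the `c a`. By Taylor's formula the
`n`-th coefficient of `p_b(X + c)` is `(D⁽ⁿ⁾ p_b)(c)` for the Hasse derivative `D⁽ⁿ⁾`, a
polynomial in `c` of degree `d_b - n`. When that degree is `< k`, multiplying by `V⁻¹`
extracts its coefficients, so the entry `(j, b)` of `V⁻¹ (p_b(X + c_a))` has degree at most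
`d_b - j`, with coefficient `choose d_b j` there. After scaling row `j` by `X ^ j`, every entry
of column `b` has degree `≤ d_b`, so the determinant has degree `≤ ∑ d_b` and top coefficient
`det (choose d_b j) = ∏_{a<b} (d_b - d_a) / ∏ j!`, which is nonzero. Undoing the scaling costs
`X ^ (k(k-1)/2)`, and `det V = (-i)^(k(k-1)/2) ∏ j!` because `c a = -i a + const`.
-/

open Matrix Finset Nat

theorem Polynomial.coeff_prod_sum_of_natDegree_le {R ι : Type*} [CommRing R] (s : Finset ι)
    (f : ι → R[X]) (e : ι → ℕ) (h : ∀ i ∈ s, (f i).natDegree ≤ e i) :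
    (∏ i ∈ s, f i).coeff (∑ i ∈ s, e i) = ∏ i ∈ s, (f i).coeff (e i) := by
  induction s using Finset.cons_induction with
  | empty => simp
  | cons a s _ ih =>
    have hs : ∀ i ∈ s, (f i).natDegree ≤ e i := fun i hi => h i (mem_cons_of_mem hi)
    rw [prod_cons, sum_cons, prod_cons, coeff_mul_add_eq_of_natDegree_le (h a (mem_cons_self _ _))
      ((natDegree_prod_le _ _).trans (sum_le_sum hs)), ih hs]

theorem Fin.sum_univ_val (n : ℕ) : ∑ i : Fin n, (i : ℕ) = n * (n - 1) / 2 := by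
  rw [Fin.sum_univ_eq_sum_range (fun i => i), sum_range_id]

section ColumnDegrees

variable {R n : Type*} [CommRing R] [Fintype n] [DecidableEq n] (A : Matrix n n R[X])
  (e : n → ℕ)

theorem Matrix.natDegree_det_le_of_natDegree_le (h : ∀ i j, (A i j).natDegree ≤ e j) :
    A.det.natDegree ≤ ∑ j, e j := by
  rw [det_apply']
  refine natDegree_sum_le_of_forall_le _ _ fun σ _ => natDegree_mul_le.trans ?_
  rw [natDegree_intCast, zero_add]
  exact (natDegree_prod_le _ _).trans (sum_le_sum fun j _ => h (σ j) j)

theorem Matrix.coeff_det_of_natDegree_le (h : ∀ i j, (A i j).natDegree ≤ e j) :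
    A.det.coeff (∑ j, e j) = (of fun i j => (A i j).coeff (e j)).det := by
  simp only [det_apply', finsetSum_coeff, ← C_eq_intCast, coeff_C_mul, of_apply]
  exact sum_congr rfl fun σ _ => by
    rw [coeff_prod_sum_of_natDegree_le _ _ _ fun j _ => h (σ j) j]

end ColumnDegrees

section Vandermonde

variable {R : Type*} [CommRing R] {n : ℕ}

theorem Matrix.det_vandermonde_mul_left (r : R) (v : Fin n → R) :
    (vandermonde fun i => r * v i).det = r ^ (n * (n - 1) / 2) * (vandermonde v).det := by
  have hcol : (vandermonde fun i => r * v i)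
      = of fun i j : Fin n => r ^ (j : ℕ) * vandermonde v i j := by
    ext i j
    simp [vandermonde_apply, mul_pow]
  rw [hcol, det_mul_row, prod_pow_eq_pow_sum, Fin.sum_univ_val]

theorem Matrix.prod_Ioi_sub_eq_neg_one_pow_mul_det_vandermonde (v : Fin n → R) :
    ∏ i : Fin n, ∏ j ∈ Ioi i, (v i - v j)
      = (-1) ^ (n * (n - 1) / 2) * (vandermonde v).det := by
  rw [← det_vandermonde_mul_left, det_vandermonde]
  exact prod_congr rfl fun i _ => prod_congr rfl fun j _ => by ring

theorem Matrix.det_vandermonde_id_eq_prod_factorial :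
    (vandermonde fun i : Fin n => (i : R)).det = ∏ i : Fin n, ((i : ℕ) ! : R) := by
  cases n with
  | zero => simp
  | succ n =>
    rw [det_vandermonde_id_eq_superFactorial, ← Nat.prod_range_succ_factorial,
      Fin.prod_univ_eq_prod_range (fun i => (i ! : R)), Nat.cast_prod]

theorem Matrix.det_choose_mul_prod_factorial [IsDomain R] (v : Fin n → ℕ) :
    (of fun j b : Fin n => ((v b).choose j : R)).det * ∏ j : Fin n, ((j : ℕ) ! : R)
      = (vandermonde fun i => (v i : R)).det := by
  rw [det_eval_matrixOfPolynomials_eq_det_vandermonde _ (fun j => descPochhammer R j)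
    (fun j => descPochhammer_natDegree R j) (fun j => monic_descPochhammer R j),
    ← det_transpose, mul_comm, ← det_mul_row]
  congr 1
  ext i j
  simp [descPochhammer_eval_eq_descFactorial, Nat.descFactorial_eq_factorial_mul_choose]

theorem Matrix.vandermonde_inv_mulVec_eval (c : Fin n → R) (hc : IsUnit (vandermonde c).det)
    (q : R[X]) (hq : q.natDegree < n) :
    (vandermonde c)⁻¹ *ᵥ (fun a => q.eval (c a)) = fun j : Fin n => q.coeff j := by
  have hV : (fun a => q.eval (c a)) = vandermonde c *ᵥ fun j : Fin n => q.coeff j := by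
    ext a
    rw [eval_eq_sum_range' hq, ← Fin.sum_univ_eq_sum_range (fun j => q.coeff j * c a ^ j)]
    simp [mulVec, dotProduct, vandermonde_apply, mul_comm]
  rw [hV, mulVec_mulVec, nonsing_inv_mul _ hc, one_mulVec]

end Vandermonde

section TaylorMatrix

variable {R : Type*} [CommRing R] {k : ℕ} (c : Fin k → R) (p : Fin k → R[X])

noncomputable def taylorMatrix : Matrix (Fin k) (Fin k) R[X] :=
  of fun a b => taylor (c a) (p b)

noncomputable def reducedTaylorMatrix : Matrix (Fin k) (Fin k) R[X] :=
  diagonal (fun j : Fin k => (X : R[X]) ^ (j : ℕ))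
    * ((vandermonde c)⁻¹.map C * taylorMatrix c p)

variable {c} (hc : IsUnit (vandermonde c).det)
include hc

theorem X_pow_mul_det_taylorMatrix :
    X ^ (k * (k - 1) / 2) * (taylorMatrix c p).det
      = C (vandermonde c).det * (reducedTaylorMatrix c p).det := by
  rw [reducedTaylorMatrix, det_mul, det_mul, det_diagonal, prod_pow_eq_pow_sum, Fin.sum_univ_val,
    show ((vandermonde c)⁻¹.map C).det = C (vandermonde c)⁻¹.det from
      (RingHom.map_det C _).symm,
    mul_left_comm, ← mul_assoc (C _), ← C_mul,
    mul_comm (vandermonde c).det, det_nonsing_inv_mul_det _ hc, C_1, one_mul]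

theorem coeff_vandermonde_inv_mul_taylorMatrix (j b : Fin k) (n : ℕ)
    (hp : (p b).natDegree < n + k) :
    (((vandermonde c)⁻¹.map C * taylorMatrix c p) j b).coeff n
      = ((j + n).choose n) * (p b).coeff (j + n) := by
  have hinterp := congrFun (vandermonde_inv_mulVec_eval c hc ((p b).hasseDeriv n)
    ((natDegree_hasseDeriv_le _ _).trans_lt (by have := j.isLt; omega))) j
  simp only [mulVec, dotProduct] at hinterp
  simp only [mul_apply, finsetSum_coeff, map_apply, taylorMatrix, of_apply, coeff_C_mul,
    taylor_coeff, hinterp, hasseDeriv_coeff]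

theorem coeff_reducedTaylorMatrix (j b : Fin k) {m : ℕ} (hm : (p b).natDegree ≤ m) :
    (reducedTaylorMatrix c p j b).coeff m = m.choose j * (p b).coeff m := by
  rw [reducedTaylorMatrix, diagonal_mul, coeff_X_pow_mul']
  split_ifs with hjm
  · rw [coeff_vandermonde_inv_mul_taylorMatrix p hc j b (m - j) (by have := j.isLt; omega),
      Nat.add_sub_cancel' hjm, Nat.choose_symm hjm]
  · rw [Nat.choose_eq_zero_of_lt (by omega), Nat.cast_zero, zero_mul]

end TaylorMatrix

theorem natDegree_leadingCoeff_det_taylorMatrix {K : Type*} [Field K] [CharZero K] {k : ℕ}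
    (c : Fin k → K) (hc : Function.Injective c) (p : Fin k → K[X]) (d : Fin k → ℕ)
    (hmonic : ∀ b, (p b).Monic) (hdeg : ∀ b, (p b).natDegree = d b)
    (hd : Function.Injective d) :
    (taylorMatrix c p).det.natDegree = ∑ b, d b - k * (k - 1) / 2
    ∧ (taylorMatrix c p).det.leadingCoeff
        = (vandermonde c).det * (of fun j b : Fin k => ((d b).choose j : K)).det
    ∧ (taylorMatrix c p).det ≠ 0 := by
  set B := of fun j b : Fin k => ((d b).choose j : K)
  have hB : B.det ≠ 0 := by
    refine left_ne_zero_of_mul (b := ∏ j : Fin k, ((j : ℕ)! : K)) ?_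
    rw [det_choose_mul_prod_factorial]
    exact det_vandermonde_ne_zero_iff.mpr (Nat.cast_injective.comp hd)
  have hV : (vandermonde c).det ≠ 0 := det_vandermonde_ne_zero_iff.mpr hc
  set A := reducedTaylorMatrix c p
  have hAcoeff : ∀ j b m, d b ≤ m → (A j b).coeff m = m.choose j * (p b).coeff m :=
    fun j b m hm => coeff_reducedTaylorMatrix p hV.isUnit j b (hdeg b ▸ hm)
  have hAdeg : ∀ j b, (A j b).natDegree ≤ d b := fun j b =>
    natDegree_le_iff_coeff_eq_zero.mpr fun m hm => by
      rw [hAcoeff j b m hm.le, coeff_eq_zero_of_natDegree_lt (hdeg b ▸ hm), mul_zero]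
  have hAlead : A.det.coeff (∑ b, d b) = B.det := by
    rw [coeff_det_of_natDegree_le A d hAdeg]
    congr 1
    ext j b
    simp only [B, of_apply, hAcoeff j b _ le_rfl]
    rw [← hdeg b, (hmonic b).coeff_natDegree, mul_one]
  have hAnat : A.det.natDegree = ∑ b, d b :=
    natDegree_eq_of_le_of_coeff_ne_zero (natDegree_det_le_of_natDegree_le A d hAdeg)
      (hAlead ▸ hB)
  have hA : A.det ≠ 0 := fun h => hB (by rw [← hAlead, h, coeff_zero])
  have hAlc : A.det.leadingCoeff = B.det := by rw [leadingCoeff, hAnat, hAlead]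
  have hfactor := X_pow_mul_det_taylorMatrix p hV.isUnit
  have hW : (taylorMatrix c p).det ≠ 0 := by
    intro h
    rw [h, mul_zero] at hfactor
    exact mul_ne_zero (C_ne_zero.mpr hV) hA hfactor.symm
  refine ⟨?_, ?_, hW⟩
  · have := congrArg natDegree hfactor
    rw [natDegree_X_pow_mul _ hW, natDegree_C_mul hV, hAnat] at this
    omega
  · have := congrArg leadingCoeff hfactor
    rwa [leadingCoeff_mul, leadingCoeff_mul, leadingCoeff_X_pow, one_mul, leadingCoeff_C,
      hAlc] at this

/-- The discrete Wronskian of monic polynomials with pairwise distinct degrees `d_a` has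
degree exactly `∑ d_a − k(k−1)/2` and leading coefficient
`i^{k(k−1)/2} ∏_{a<b} (d_a − d_b)`; in particular it is nonzero. -/
theorem stmt14 (k : ℕ) (p : Fin k → Polynomial ℂ) (d : Fin k → ℕ)
    (hmonic : ∀ a, (p a).Monic) (hdeg : ∀ a, (p a).natDegree = d a)
    (hinj : Function.Injective d) :
    (WrP k p).natDegree = (∑ a : Fin k, d a) - k * (k - 1) / 2
    ∧ (WrP k p).leadingCoeff
        = Complex.I ^ (k * (k - 1) / 2)
            * ∏ a : Fin k, ∏ b ∈ Finset.Ioi a, ((d a : ℂ) - (d b : ℂ))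
    ∧ WrP k p ≠ 0 := by
  set c : Fin k → ℂ := fun a => Complex.I * ((k : ℂ) - 1 - 2 * ((a : ℕ) : ℂ)) / 2
  have hW : WrP k p = (taylorMatrix c p).det := by simp only [WrP, taylorMatrix, taylor_apply, c]
  set F : ℂ := ∏ j : Fin k, ((j : ℕ)! : ℂ)
  have hF : F ≠ 0 := prod_ne_zero_iff.mpr fun j _ => Nat.cast_ne_zero.mpr (factorial_ne_zero _)
  have hV : (vandermonde c).det = (-Complex.I) ^ (k * (k - 1) / 2) * F := by
    have hshift : c = fun a : Fin k =>
        -Complex.I * ((a : ℕ) : ℂ) + Complex.I * ((k : ℂ) - 1) / 2 := by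
      ext a
      ring
    rw [hshift, det_vandermonde_add, det_vandermonde_mul_left, det_vandermonde_id_eq_prod_factorial]
  have hVne : (vandermonde c).det ≠ 0 :=
    hV ▸ mul_ne_zero (pow_ne_zero _ (neg_ne_zero.mpr Complex.I_ne_zero)) hF
  obtain ⟨hnat, hlc, hne⟩ := natDegree_leadingCoeff_det_taylorMatrix c
    (det_vandermonde_ne_zero_iff.mp hVne) p d hmonic hdeg hinj
  have hlead : (WrP k p).leadingCoeff = Complex.I ^ (k * (k - 1) / 2)
      * ∏ a : Fin k, ∏ b ∈ Finset.Ioi a, ((d a : ℂ) - (d b : ℂ)) := by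
    rw [hW, hlc, hV, prod_Ioi_sub_eq_neg_one_pow_mul_det_vandermonde,
      ← det_choose_mul_prod_factorial, neg_eq_neg_one_mul, mul_pow]
    ring
  exact ⟨hW ▸ hnat, hlead, hW ▸ hne⟩
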